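/- arXiv:2509.21235 — 6 statements merged into one kernel-verified Lean document; each statement's English description precedes it below -/
import Mathlib

section
/- Let (w,t) ∈ ℍ × ℝ with |w|² + t² = 1 and t ≠ 1. Then the fiber of the Hopf map over (w,t) is exactly {(u,v) ∈ ℍ × ℍ : |u|² + |v|² = 1 and h(u,v) = (w,t)} = { ( (1/√(2(1−t)))·(w·z), √((1−t)/2)·z ) : z ∈ ℍ, |z| = 1 }. -/
open scoped Quaternion

/-- The quaternionic Hopf map `h(u,v) = (2·u·conj(v), |u|² − |v|²)`. -/
noncomputable def hopf (p : ℍ[ℝ] × ℍ[ℝ]) : ℍ[ℝ] × ℝ :=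
  (2 * (p.1 * star p.2), ‖p.1‖ ^ 2 - ‖p.2‖ ^ 2)

/-- Let `(w,t) ∈ ℍ × ℝ` with `|w|² + t² = 1` and `t ≠ 1`.  Then the fiber of the Hopf map
over `(w,t)` is exactly
`{(u,v) ∈ S⁷ : h(u,v) = (w,t)} = {((1/√(2(1−t)))·(w·z), √((1−t)/2)·z) : z ∈ ℍ, |z| = 1}`. -/
theorem hopf_fiber_eq (w : ℍ[ℝ]) (t : ℝ) (hwt : ‖w‖ ^ 2 + t ^ 2 = 1) (ht : t ≠ 1) :
    {p : ℍ[ℝ] × ℍ[ℝ] | ‖p.1‖ ^ 2 + ‖p.2‖ ^ 2 = 1 ∧ hopf p = (w, t)} =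
      {p : ℍ[ℝ] × ℍ[ℝ] | ∃ z : ℍ[ℝ], ‖z‖ = 1 ∧
        p = ((1 / Real.sqrt (2 * (1 - t))) • (w * z), Real.sqrt ((1 - t) / 2) • z)} := by
  have hwn : (0:ℝ) ≤ ‖w‖ ^ 2 := sq_nonneg _
  have htlt : t < 1 := lt_of_le_of_ne (by nlinarith) ht
  have h1t : 0 < 1 - t := by linarith
  ext ⟨u, v⟩
  simp only [Set.mem_setOf_eq, hopf, Prod.mk.injEq, Prod.ext_iff]
  constructor
  · rintro ⟨hs, hw, ht'⟩
    have hv2 : ‖v‖ ^ 2 = (1 - t) / 2 := by linarith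
    have hvpos : 0 < ‖v‖ := by nlinarith [norm_nonneg v]
    refine ⟨‖v‖⁻¹ • v, ?_, ?_, ?_⟩
    · rw [norm_smul, Real.norm_eq_abs, abs_inv, abs_norm, inv_mul_cancel₀ hvpos.ne']
    · have hsq : Real.sqrt (2 * (1 - t)) = 2 * ‖v‖ := by
        rw [show 2 * (1 - t) = (2 * ‖v‖) ^ 2 by nlinarith, Real.sqrt_sq (by positivity)]
      have key : w * (‖v‖⁻¹ • v) = (2 * ‖v‖) • u := by
        rw [← hw, mul_smul_comm, mul_assoc, mul_assoc u (star v) v, Quaternion.star_mul_self,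
          Quaternion.mul_coe_eq_smul, Quaternion.normSq_eq_norm_mul_self]
        rw [mul_smul_comm, smul_smul, show ‖v‖⁻¹ * (‖v‖ * ‖v‖) = ‖v‖ by field_simp,
          show ((2:ℍ[ℝ]) * u) = (2:ℝ) • u by rw [two_smul ℝ u, two_mul],
          smul_smul, mul_comm]
      rw [hsq, key, smul_smul]
      rw [show 1 / (2 * ‖v‖) * (2 * ‖v‖) = 1 by field_simp, one_smul]
    · rw [show (1 - t)/2 = ‖v‖ ^ 2 from hv2.symm, Real.sqrt_sq (norm_nonneg v),
        smul_smul, mul_inv_cancel₀ hvpos.ne', one_smul]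
  · rintro ⟨z, hz, h1, h2⟩
    subst h1; subst h2
    have hd : Real.sqrt ((1 - t) / 2) ^ 2 = (1 - t) / 2 := Real.sq_sqrt (by positivity)
    have hdpos : 0 < Real.sqrt ((1 - t) / 2) := Real.sqrt_pos.mpr (by positivity)
    have hsq : Real.sqrt (2 * (1 - t)) = 2 * Real.sqrt ((1 - t) / 2) := by
      rw [show 2 * (1 - t) = (2 * Real.sqrt ((1 - t) / 2)) ^ 2 by nlinarith,
        Real.sqrt_sq (by positivity)]
    have hzz : z * star z = ((1:ℝ) : ℍ[ℝ]) := by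
      rw [Quaternion.self_mul_star, Quaternion.normSq_eq_norm_mul_self, hz, one_mul]
    have hnorm1 : ‖(1 / Real.sqrt (2 * (1 - t))) • (w * z)‖ ^ 2 = (1 + t) / 2 := by
      rw [norm_smul, norm_mul, hz, mul_one, Real.norm_eq_abs, hsq]
      rw [abs_of_pos (by positivity), mul_pow, div_pow, one_pow, mul_pow, hd]
      have : ‖w‖ ^ 2 = (1 - t) * (1 + t) := by nlinarith
      rw [this]
      field_simp
    refine ⟨?_, ?_, ?_⟩
    · rw [hnorm1, norm_smul, Real.norm_eq_abs, abs_of_pos hdpos, mul_pow, hz, one_pow,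
        mul_one, hd]; ring
    · rw [Quaternion.star_smul, smul_mul_smul_comm, hsq, mul_assoc, hzz, Quaternion.mul_coe_eq_smul,
        one_smul]
      rw [show 1 / (2 * Real.sqrt ((1 - t) / 2)) * Real.sqrt ((1 - t) / 2) = 1/2 by
        field_simp]
      rw [show ((2:ℍ[ℝ]) * ((1/2 : ℝ) • w)) = w by
        rw [mul_smul_comm, show ((2:ℍ[ℝ]) * w) = (2:ℝ) • w by rw [two_smul ℝ w, two_mul], smul_smul]; norm_num]
    · rw [hnorm1, norm_smul, Real.norm_eq_abs, abs_of_pos hdpos, mul_pow, hz, one_pow,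
        mul_one, hd]; ring
end

section
/- For (u,v) and (u′,v′) in S⁷ (i.e., |u|² + |v|² = 1 = |u′|² + |v′|²), one has h(u,v) = h(u′,v′) if and only if there exists a quaternion z with |z| = 1 such that u′ = u·z and v′ = v·z. -/
open scoped Quaternion

/-!
Right multiplication by `z` with `z z̄ = 1` visibly preserves both components of `h`. Conversely, if
`h(u,v) = h(u',v')` then `u v̄ = u' v̄'` and `|u| = |u'|`, `|v| = |v'|`, and the single quaternion
`z = ū u' + v̄ v'` works with no case split: `u z = |u|² u' + u' v̄' v' = (|u|² + |v'|²) u' = u'`,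
symmetrically `v z = v'`, and then `1 = |u'|² + |v'|² = (|u|² + |v|²) |z|² = |z|²`.
-/

namespace Quaternion

instance {R : Type*} [CommRing R] [CharZero R] : CharZero ℍ[R] :=
  charZero_of_injective_algebraMap coe_injective

theorem self_mul_star_eq_norm_sq (a : ℍ[ℝ]) : a * star a = ((‖a‖ ^ 2 : ℝ) : ℍ[ℝ]) := by
  rw [self_mul_star, normSq_eq_norm_mul_self, sq]

theorem star_mul_self_eq_norm_sq (a : ℍ[ℝ]) : star a * a = ((‖a‖ ^ 2 : ℝ) : ℍ[ℝ]) := by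
  rw [star_comm_self, self_mul_star_eq_norm_sq]

theorem mul_star_mul_add_star_mul {u v u' v' : ℍ[ℝ]} (h : u * star v = u' * star v') :
    u * (star u * u' + star v * v') = (‖u‖ ^ 2 + ‖v'‖ ^ 2) • u' := by
  rw [mul_add, ← mul_assoc, ← mul_assoc, h, mul_assoc u', self_mul_star_eq_norm_sq,
    star_mul_self_eq_norm_sq, coe_mul_eq_smul, mul_coe_eq_smul, add_smul]

theorem norm_eq_one_of_norm_mul_sq_add {u v z : ℍ[ℝ]} (huv : ‖u‖ ^ 2 + ‖v‖ ^ 2 = 1)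
    (h : ‖u * z‖ ^ 2 + ‖v * z‖ ^ 2 = 1) : ‖z‖ = 1 := by
  rw [norm_mul, norm_mul, mul_pow, mul_pow, ← add_mul, huv, one_mul] at h
  exact (pow_eq_one_iff_of_nonneg (norm_nonneg z) two_ne_zero).mp h

end Quaternion

open Quaternion

theorem hopf_mul_right (u v z : ℍ[ℝ]) (hz : ‖z‖ = 1) : hopf (u * z, v * z) = hopf (u, v) := by
  have hzz : z * star z = 1 := by rw [self_mul_star_eq_norm_sq, hz, one_pow, coe_one]
  simp only [hopf, star_mul, mul_assoc, ← mul_assoc z, hzz, one_mul, norm_mul, hz, mul_one]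

/-- For `(u,v)` and `(u′,v′)` in `S⁷`, one has `h(u,v) = h(u′,v′)` if and only if there
exists a quaternion `z` with `|z| = 1` such that `u′ = u·z` and `v′ = v·z`. -/
theorem hopf_eq_iff_unit_quaternion (u v u' v' : ℍ[ℝ])
    (huv : ‖u‖ ^ 2 + ‖v‖ ^ 2 = 1) (huv' : ‖u'‖ ^ 2 + ‖v'‖ ^ 2 = 1) :
    hopf (u, v) = hopf (u', v') ↔
      ∃ z : ℍ[ℝ], ‖z‖ = 1 ∧ u' = u * z ∧ v' = v * z := by
  constructor
  · intro h
    obtain ⟨hprod, hdiff⟩ := Prod.ext_iff.mp h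
    have huv_eq : u * star v = u' * star v' := mul_left_cancel₀ two_ne_zero hprod
    have hvu_eq : v * star u = v' * star u' := by simpa using congrArg star huv_eq
    have hnorm : ‖u‖ ^ 2 - ‖v‖ ^ 2 = ‖u'‖ ^ 2 - ‖v'‖ ^ 2 := hdiff
    have huz : u * (star u * u' + star v * v') = u' := by
      rw [mul_star_mul_add_star_mul huv_eq, show ‖u‖ ^ 2 + ‖v'‖ ^ 2 = 1 by linarith, one_smul]
    have hvz : v * (star u * u' + star v * v') = v' := by
      rw [add_comm, mul_star_mul_add_star_mul hvu_eq, show ‖v‖ ^ 2 + ‖u'‖ ^ 2 = 1 by linarith,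
        one_smul]
    refine ⟨_, norm_eq_one_of_norm_mul_sq_add huv ?_, huz.symm, hvz.symm⟩
    rwa [huz, hvz]
  · rintro ⟨z, hz, rfl, rfl⟩
    exact (hopf_mul_right u v z hz).symm
end

section
/- Let U = S⁴ \ {(0,1)}. The map Φ(w,t,z) = ( (1/√(2(1−t)))·(w·z), √((1−t)/2)·z ) is a homeomorphism from U × S³ (with the subspace and product topologies) onto the subset h⁻¹(U) ∩ S⁷ of ℍ × ℍ (with the subspace topology), and it satisfies h(Φ(w,t,z)) = (w,t) for all (w,t) ∈ U and z ∈ S³. -/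
/-! The inverse of `Φ` is `(u, v) ↦ (h(u, v), v / |v|)`. Writing `t = |u|² − |v|²`, on `S⁷` one
has `1 − t = 2|v|²`, so `v ≠ 0` off `h⁻¹(0, 1)` and `√((1 − t)/2) = |v|`. Conversely, for
`(w, t, z) ∈ U × S³` the two components of `Φ(w, t, z)` have squared norms `(1 + t)/2` and
`(1 − t)/2`; their sum and difference give `Φ(w, t, z) ∈ S⁷` and the second component of
`h(Φ(w, t, z)) = (w, t)`. Since `t < 1` on `U`, both maps are continuous. -/

open scoped Quaternion

/-- The unit sphere `S⁷` in `ℍ × ℍ`. -/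
def sphere7 : Set (ℍ[ℝ] × ℍ[ℝ]) := {p | ‖p.1‖ ^ 2 + ‖p.2‖ ^ 2 = 1}

/-- The unit sphere `S⁴` in `ℍ × ℝ`. -/
def sphere4 : Set (ℍ[ℝ] × ℝ) := {p | ‖p.1‖ ^ 2 + p.2 ^ 2 = 1}

/-- The unit sphere `S³` in `ℍ`. -/
def sphere3 : Set ℍ[ℝ] := {z | ‖z‖ = 1}

/-- `U = S⁴ \ {(0,1)}`. -/
def sphere4U : Set (ℍ[ℝ] × ℝ) := sphere4 \ {(0, 1)}

/-- The local trivialization `Φ(w,t,z) = ((1/√(2(1−t)))·(w·z), √((1−t)/2)·z)`. -/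
noncomputable def hopfTriv (p : (ℍ[ℝ] × ℝ) × ℍ[ℝ]) : ℍ[ℝ] × ℍ[ℝ] :=
  ((1 / Real.sqrt (2 * (1 - p.1.2))) • (p.1.1 * p.2), Real.sqrt ((1 - p.1.2) / 2) • p.2)

lemma Quaternion.mul_star_eq_one_of_norm_eq_one {z : ℍ[ℝ]} (hz : ‖z‖ = 1) : z * star z = 1 := by
  rw [Quaternion.self_mul_star, Quaternion.normSq_eq_norm_mul_self, hz, mul_one,
    Quaternion.coe_one]

lemma lt_one_of_mem_sphere4U {p : ℍ[ℝ] × ℝ} (hp : p ∈ sphere4U) : p.2 < 1 := by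
  obtain ⟨hsphere, hpole⟩ := hp
  have hle : p.2 ≤ 1 := by nlinarith [sq_nonneg ‖p.1‖, hsphere.symm]
  refine hle.lt_of_ne fun ht => hpole (Prod.ext ?_ ht)
  have : ‖p.1‖ ^ 2 = 0 := by simpa [sphere4, ht] using hsphere
  simpa using this

lemma hopfTriv_eq (w z : ℍ[ℝ]) (t : ℝ) :
    hopfTriv ((w, t), z) = ((2 * √((1 - t) / 2))⁻¹ • (w * z), √((1 - t) / 2) • z) := by
  rw [hopfTriv, one_div, show 2 * (1 - t) = 2 ^ 2 * ((1 - t) / 2) by ring,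
    Real.sqrt_mul (by positivity), Real.sqrt_sq zero_le_two]

section HopfTriv

variable {w z : ℍ[ℝ]} {t : ℝ}

lemma sq_norm_hopfTriv_snd (ht : t ≤ 1) (hz : ‖z‖ = 1) :
    ‖(hopfTriv ((w, t), z)).2‖ ^ 2 = (1 - t) / 2 := by
  rw [hopfTriv_eq, norm_smul, hz, mul_one, Real.norm_eq_abs, sq_abs,
    Real.sq_sqrt (by linarith)]

lemma sq_norm_hopfTriv_fst (ht : t < 1) (hw : ‖w‖ ^ 2 + t ^ 2 = 1) (hz : ‖z‖ = 1) :
    ‖(hopfTriv ((w, t), z)).1‖ ^ 2 = (1 + t) / 2 := by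
  have h1t : 0 < 1 - t := by linarith
  rw [hopfTriv_eq, norm_smul, norm_mul, hz, mul_one, mul_pow, norm_inv, Real.norm_eq_abs,
    inv_pow, sq_abs, mul_pow, Real.sq_sqrt (by positivity), show ‖w‖ ^ 2 = (1 - t) * (1 + t) by
    linarith]
  field_simp

lemma hopf_hopfTriv_fst (ht : t < 1) (hz : ‖z‖ = 1) : (hopf (hopfTriv ((w, t), z))).1 = w := by
  have hs : √((1 - t) / 2) ≠ 0 := (Real.sqrt_pos.2 (by linarith)).ne'
  rw [hopfTriv_eq, hopf, Quaternion.star_smul, smul_mul_smul_comm, mul_assoc,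
    Quaternion.mul_star_eq_one_of_norm_eq_one hz, mul_one, mul_smul_comm, two_mul w,
    ← two_smul ℝ w, smul_smul]
  field_simp
  simp

end HopfTriv

lemma hopf_hopfTriv {p : (ℍ[ℝ] × ℝ) × ℍ[ℝ]} (hp : p ∈ sphere4U ×ˢ sphere3) :
    hopf (hopfTriv p) = p.1 := by
  obtain ⟨⟨w, t⟩, z⟩ := p
  obtain ⟨hwt, hz⟩ := hp
  have ht : t < 1 := lt_one_of_mem_sphere4U hwt
  refine Prod.ext (hopf_hopfTriv_fst ht hz) ?_
  change ‖_‖ ^ 2 - ‖_‖ ^ 2 = t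
  rw [sq_norm_hopfTriv_fst ht hwt.1 hz, sq_norm_hopfTriv_snd ht.le hz]
  ring

lemma hopfTriv_mem_sphere7 {p : (ℍ[ℝ] × ℝ) × ℍ[ℝ]} (hp : p ∈ sphere4U ×ˢ sphere3) :
    hopfTriv p ∈ sphere7 := by
  obtain ⟨⟨w, t⟩, z⟩ := p
  obtain ⟨hwt, hz⟩ := hp
  have ht : t < 1 := lt_one_of_mem_sphere4U hwt
  change ‖_‖ ^ 2 + ‖_‖ ^ 2 = 1
  rw [sq_norm_hopfTriv_fst ht hwt.1 hz, sq_norm_hopfTriv_snd ht.le hz]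
  ring

lemma hopfTriv_mapsTo :
    Set.MapsTo hopfTriv (sphere4U ×ˢ sphere3) (hopf ⁻¹' sphere4U ∩ sphere7) :=
  fun p hp => ⟨by rw [Set.mem_preimage, hopf_hopfTriv hp]; exact hp.1,
    hopfTriv_mem_sphere7 hp⟩

lemma snd_ne_zero_of_mem_hopf_preimage {q : ℍ[ℝ] × ℍ[ℝ]}
    (hq : q ∈ hopf ⁻¹' sphere4U ∩ sphere7) : q.2 ≠ 0 := by
  obtain ⟨⟨-, hpole⟩, hq⟩ := hq
  intro hv
  refine hpole (Prod.ext ?_ ?_)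
  · simp [hopf, hv]
  · simpa [hopf, sphere7, hv] using hq

noncomputable def hopfTrivInv (q : ℍ[ℝ] × ℍ[ℝ]) : (ℍ[ℝ] × ℝ) × ℍ[ℝ] :=
  (hopf q, ‖q.2‖⁻¹ • q.2)

lemma hopfTrivInv_mapsTo :
    Set.MapsTo hopfTrivInv (hopf ⁻¹' sphere4U ∩ sphere7) (sphere4U ×ˢ sphere3) := by
  intro q hq
  refine ⟨hq.1, ?_⟩
  change ‖‖q.2‖⁻¹ • q.2‖ = 1
  rw [norm_smul, norm_inv, norm_norm, inv_mul_cancel₀ (norm_ne_zero_iff.2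
    (snd_ne_zero_of_mem_hopf_preimage hq))]

lemma hopfTrivInv_hopfTriv :
    Set.LeftInvOn hopfTrivInv hopfTriv (sphere4U ×ˢ sphere3) := by
  rintro ⟨⟨w, t⟩, z⟩ hp
  have hs : 0 < √((1 - t) / 2) := Real.sqrt_pos.2 (by linarith [lt_one_of_mem_sphere4U hp.1])
  refine Prod.ext (hopf_hopfTriv hp) ?_
  change ‖(hopfTriv _).2‖⁻¹ • (hopfTriv _).2 = z
  rw [hopfTriv_eq, norm_smul, Real.norm_of_nonneg hs.le, show ‖z‖ = 1 from hp.2, mul_one,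
    smul_smul, inv_mul_cancel₀ hs.ne', one_smul]

lemma hopfTriv_hopfTrivInv :
    Set.RightInvOn hopfTrivInv hopfTriv (hopf ⁻¹' sphere4U ∩ sphere7) := by
  rintro ⟨u, v⟩ hq
  have hv : 0 < ‖v‖ := norm_pos_iff.2 (snd_ne_zero_of_mem_hopf_preimage hq)
  have hs : √((1 - (‖u‖ ^ 2 - ‖v‖ ^ 2)) / 2) = ‖v‖ := by
    have huv : ‖u‖ ^ 2 + ‖v‖ ^ 2 = 1 := hq.2
    rw [show (1 - (‖u‖ ^ 2 - ‖v‖ ^ 2)) / 2 = ‖v‖ ^ 2 by linarith, Real.sqrt_sq hv.le]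
  have hvv : star v * v = ((‖v‖ ^ 2 : ℝ) : ℍ[ℝ]) := by
    rw [Quaternion.star_mul_self, Quaternion.normSq_eq_norm_mul_self, sq]
  change hopfTriv ((_, _), _) = _
  rw [hopfTriv_eq, hs, smul_smul, mul_inv_cancel₀ hv.ne', one_smul, Prod.mk.injEq]
  refine ⟨?_, rfl⟩
  change (2 * ‖v‖)⁻¹ • (2 * (u * star v) * ‖v‖⁻¹ • v) = u
  rw [mul_smul_comm, mul_assoc 2, mul_assoc, hvv, Quaternion.mul_coe_eq_smul, mul_smul_comm,
    two_mul u, ← two_smul ℝ u, smul_smul, smul_smul, smul_smul]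
  field_simp
  simp

lemma continuousOn_hopfTriv : ContinuousOn hopfTriv (sphere4U ×ˢ sphere3) := by
  have hs : ∀ p ∈ sphere4U ×ˢ sphere3, √(2 * (1 - p.1.2)) ≠ 0 := fun p hp =>
    (Real.sqrt_pos.2 (by linarith [lt_one_of_mem_sphere4U hp.1])).ne'
  unfold hopfTriv
  fun_prop (disch := exact hs)

lemma continuousOn_hopfTrivInv : ContinuousOn hopfTrivInv (hopf ⁻¹' sphere4U ∩ sphere7) := by
  have hv : ∀ q ∈ hopf ⁻¹' sphere4U ∩ sphere7, ‖q.2‖ ≠ 0 := fun q hq =>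
    norm_ne_zero_iff.2 (snd_ne_zero_of_mem_hopf_preimage hq)
  unfold hopfTrivInv hopf
  fun_prop (disch := exact hv)

noncomputable def hopfTrivPartialHomeomorph :
    PartialHomeomorph ((ℍ[ℝ] × ℝ) × ℍ[ℝ]) (ℍ[ℝ] × ℍ[ℝ]) where
  toFun := hopfTriv
  invFun := hopfTrivInv
  source := sphere4U ×ˢ sphere3
  target := hopf ⁻¹' sphere4U ∩ sphere7
  map_source' := hopfTriv_mapsTo
  map_target' := hopfTrivInv_mapsTo
  left_inv' := hopfTrivInv_hopfTriv
  right_inv' := hopfTriv_hopfTrivInv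
  continuousOn_toFun := continuousOn_hopfTriv
  continuousOn_invFun := continuousOn_hopfTrivInv

/-- Let `U = S⁴ \ {(0,1)}`.  The map `Φ(w,t,z) = ((1/√(2(1−t)))·(w·z), √((1−t)/2)·z)` is a
homeomorphism from `U × S³` onto the subset `h⁻¹(U) ∩ S⁷` of `ℍ × ℍ` (all with the subspace
topologies), and it satisfies `h(Φ(w,t,z)) = (w,t)` for all `(w,t) ∈ U` and `z ∈ S³`. -/
theorem hopf_local_trivialization :
    (∃ e : (sphere4U ×ˢ sphere3 : Set ((ℍ[ℝ] × ℝ) × ℍ[ℝ])) ≃ₜ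
        (hopf ⁻¹' sphere4U ∩ sphere7 : Set (ℍ[ℝ] × ℍ[ℝ])),
      ∀ p : (sphere4U ×ˢ sphere3 : Set ((ℍ[ℝ] × ℝ) × ℍ[ℝ])),
        (e p : ℍ[ℝ] × ℍ[ℝ]) = hopfTriv (p : (ℍ[ℝ] × ℝ) × ℍ[ℝ])) ∧
    ∀ p ∈ (sphere4U ×ˢ sphere3 : Set ((ℍ[ℝ] × ℝ) × ℍ[ℝ])), hopf (hopfTriv p) = p.1 :=
  ⟨⟨hopfTrivPartialHomeomorph.toHomeomorphSourceTarget, fun _ => rfl⟩, fun _ => hopf_hopfTriv⟩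
end

section
/- Let (a,b) ∈ ℍ × ℍ with |a|² + |b|² = 1 and let (w,t) ∈ ℍ × ℝ with |w|² + t² = 1 and t < 1. Then α_{a,b}(w,t) = 0 if and only if (w,t) = (−2·conj(a)·b, −(|a|² − |b|²)), i.e., if and only if (w,t) = −h(conj(a), conj(b)). -/
open scoped Quaternion

/-- `α_{a,b}(w,t) = (1/√(2(1−t)))·(a·w) + √((1−t)/2)·b`. -/
noncomputable def alphaFn (a b : ℍ[ℝ]) (w : ℍ[ℝ]) (t : ℝ) : ℍ[ℝ] :=
  (1 / Real.sqrt (2 * (1 - t))) • (a * w) + Real.sqrt ((1 - t) / 2) • b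

/-- Let `(a,b) ∈ ℍ × ℍ` with `|a|² + |b|² = 1` and let `(w,t) ∈ ℍ × ℝ` with
`|w|² + t² = 1` and `t < 1`.  Then `α_{a,b}(w,t) = 0` if and only if
`(w,t) = (−2·conj(a)·b, −(|a|² − |b|²))`, i.e. iff `(w,t) = −h(conj(a), conj(b))`. -/
theorem alphaFn_eq_zero_iff (a b w : ℍ[ℝ]) (t : ℝ)
    (hab : ‖a‖ ^ 2 + ‖b‖ ^ 2 = 1) (hwt : ‖w‖ ^ 2 + t ^ 2 = 1) (ht : t < 1) :
    alphaFn a b w t = 0 ↔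
      (w, t) = (-(2 * (star a * b)), -(‖a‖ ^ 2 - ‖b‖ ^ 2)) ∧
      (w, t) = -hopf (star a, star b) := by
  have ht' : (0:ℝ) < 1 - t := by linarith
  have hs : (0:ℝ) < Real.sqrt (2 * (1 - t)) := Real.sqrt_pos.2 (by linarith)
  have hpair : (-hopf (star a, star b) : ℍ[ℝ] × ℝ)
      = (-(2 * (star a * b)), -(‖a‖ ^ 2 - ‖b‖ ^ 2)) := by
    simp [hopf, Prod.ext_iff, norm_star, star_star]
  have key : Real.sqrt (2 * (1 - t)) • alphaFn a b w t = a * w + (1 - t) • b := by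
    unfold alphaFn
    rw [smul_add, smul_smul, smul_smul]
    congr 1
    · rw [mul_one_div, div_self hs.ne', one_smul]
    · congr 1
      rw [← Real.sqrt_mul (by linarith : (0:ℝ) ≤ 2 * (1 - t)),
        show (2 * (1 - t)) * ((1 - t) / 2) = (1 - t) ^ 2 by ring,
        Real.sqrt_sq (by linarith)]
  have hiff : alphaFn a b w t = 0 ↔ a * w = -((1 - t) • b) := by
    constructor
    · intro h
      have := key
      rw [h, smul_zero] at this
      have h2 : a * w + (1 - t) • b = 0 := this.symm
      linear_combination (norm := module) h2
    · intro h
      have h0 : Real.sqrt (2 * (1 - t)) • alphaFn a b w t = 0 := by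
        rw [key, h]; module
      exact (smul_eq_zero_iff_right hs.ne').mp h0
  have h2s : ∀ x : ℍ[ℝ], 2 * x = (2:ℝ) • x := fun x => by
    rw [show ((2:ℍ[ℝ])) = ((2:ℝ):ℍ[ℝ]) by norm_cast, Quaternion.coe_mul_eq_smul]
  rw [hiff]
  constructor
  · intro h1
    -- first, a ≠ 0
    have ha : a ≠ 0 := by
      intro ha0
      rw [ha0, zero_mul] at h1
      have hb : b = 0 := by
        have := h1.symm
        rw [neg_eq_zero, smul_eq_zero] at this
        rcases this with h | h
        · exact absurd h ht'.ne'
        · exact h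
      rw [ha0, hb] at hab
      simp at hab
    have hna : (0:ℝ) < ‖a‖ ^ 2 := pow_pos (norm_pos_iff.2 ha) 2
    -- norms
    have hA : ‖a‖ ^ 2 * ‖w‖ ^ 2 = (1 - t) ^ 2 * ‖b‖ ^ 2 := by
      have := congrArg (fun x => ‖x‖ ^ 2) h1
      simp only [norm_mul, norm_neg, norm_smul, Real.norm_eq_abs,
        abs_of_pos ht'] at this
      nlinarith [this]
    have hw2 : ‖w‖ ^ 2 = 1 - t ^ 2 := by linarith
    have h2 : ‖a‖ ^ 2 * (1 + t) = (1 - t) * ‖b‖ ^ 2 := by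
      apply mul_left_cancel₀ ht'.ne'
      nlinarith [hA, hw2]
    have ht2 : t = ‖b‖ ^ 2 - ‖a‖ ^ 2 := by nlinarith [h2, hab]
    have h1t : 1 - t = 2 * ‖a‖ ^ 2 := by linarith
    -- w
    have hw : w = -(2 * (star a * b)) := by
      have hm : star a * (a * w) = star a * (-((1 - t) • b)) := by rw [h1]
      rw [← mul_assoc] at hm
      have hsa : star a * a = ((‖a‖ ^ 2 : ℝ) : ℍ[ℝ]) := by
        rw [Quaternion.star_mul_self]
        norm_cast
        rw [Quaternion.normSq_eq_norm_mul_self]; ring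
      rw [hsa] at hm
      have hm2 : (‖a‖ ^ 2 : ℝ) • w = (‖a‖ ^ 2 : ℝ) • (-(2 * (star a * b))) := by
        rw [← Quaternion.coe_mul_eq_smul, hm, mul_neg, mul_smul_comm, h1t,
          h2s (star a * b)]
        module
      exact smul_right_injective ℍ[ℝ] hna.ne' hm2
    refine ⟨?_, ?_⟩
    · rw [Prod.ext_iff]
      exact ⟨hw, by dsimp; linarith⟩
    · rw [hpair, Prod.ext_iff]
      exact ⟨hw, by dsimp; linarith⟩
  · rintro ⟨h1, -⟩
    rw [Prod.ext_iff] at h1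
    obtain ⟨hw, ht2⟩ := h1
    dsimp at hw ht2
    have h1t : 1 - t = 2 * ‖a‖ ^ 2 := by rw [ht2]; linarith
    rw [hw, h1t]
    have hsa : a * star a = ((‖a‖ ^ 2 : ℝ) : ℍ[ℝ]) := by
      rw [Quaternion.self_mul_star]
      norm_cast
      rw [Quaternion.normSq_eq_norm_mul_self]; ring
    have hab' : a * (star a * b) = (‖a‖ ^ 2 : ℝ) • b := by
      rw [← mul_assoc, hsa, Quaternion.coe_mul_eq_smul]
    rw [h2s (star a * b), mul_neg, mul_smul_comm, hab']
    module
end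

section
/- Let θ, α be real numbers with 0 < θ < π and 0 < α < π, and set λ⁺ = cot(θ/2), λ⁻ = cot((θ+π)/2), μ⁺ = cot(α/2), μ⁻ = cot((α+π)/2). Then (λ⁺ − μ⁻) ≠ 0, (μ⁺ − λ⁻) ≠ 0, 1 + cos(θ − α) ≠ 0, and the cross-ratio satisfies ((λ⁺ − λ⁻)·(μ⁺ − μ⁻)) / ((λ⁺ − μ⁻)·(μ⁺ − λ⁻)) = 2 / (1 + cos(θ − α)). Moreover, this value equals 1 if and only if θ = α. -/
/-!
With `x = θ/2`, `y = α/2` the shifted curvatures are `cot (x + π/2) = -tan x`, so every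
difference in the cross-ratio is a sum `cot u + tan v = cos (u - v) / (sin u * cos v)`
(with `cos 0 = 1` on the diagonal). The sines and cosines cancel and leave `1 / cos (x - y) ^ 2`,
which is `2 / (1 + cos (θ - α))` by the double-angle formula; it equals `1` exactly when
`cos (θ - α) = 1`, i.e. `θ = α` since `|θ - α| < π`.
-/

open Real

namespace Real

theorem cot_add_pi_div_two (x : ℝ) : cot (x + π / 2) = -tan x := by
  rw [cot_eq_cos_div_sin, tan_eq_sin_div_cos, cos_add_pi_div_two, sin_add_pi_div_two, neg_div]

theorem cos_sub_comm (x y : ℝ) : cos (x - y) = cos (y - x) := by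
  rw [← cos_neg, neg_sub]

theorem cot_add_tan_of_ne_zero {x y : ℝ} (hx : sin x ≠ 0) (hy : cos y ≠ 0) :
    cot x + tan y = cos (x - y) / (sin x * cos y) := by
  rw [cot_eq_cos_div_sin, tan_eq_sin_div_cos, cos_sub]
  field_simp

theorem cot_tan_cross_ratio {x y : ℝ} (hsx : sin x ≠ 0) (hcx : cos x ≠ 0) (hsy : sin y ≠ 0)
    (hcy : cos y ≠ 0) (hxy : cos (x - y) ≠ 0) :
    (cot x + tan x) * (cot y + tan y) / ((cot x + tan y) * (cot y + tan x)) =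
      1 / cos (x - y) ^ 2 := by
  simp only [cot_add_tan_of_ne_zero hsx hcx, cot_add_tan_of_ne_zero hsy hcy,
    cot_add_tan_of_ne_zero hsx hcy, cot_add_tan_of_ne_zero hsy hcx, sub_self, cos_zero,
    cos_sub_comm y x]
  field_simp

theorem one_add_cos_two_mul (x : ℝ) : 1 + cos (2 * x) = 2 * cos x ^ 2 := by
  rw [cos_sq]; ring

end Real

/-- Let `θ, α` be real with `0 < θ < π` and `0 < α < π`, and set `λ⁺ = cot(θ/2)`,
`λ⁻ = cot((θ+π)/2)`, `μ⁺ = cot(α/2)`, `μ⁻ = cot((α+π)/2)`.  Then `λ⁺ − μ⁻ ≠ 0`,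
`μ⁺ − λ⁻ ≠ 0`, `1 + cos(θ − α) ≠ 0`, and the cross-ratio satisfies
`((λ⁺ − λ⁻)·(μ⁺ − μ⁻)) / ((λ⁺ − μ⁻)·(μ⁺ − λ⁻)) = 2 / (1 + cos(θ − α))`.
Moreover, this value equals `1` if and only if `θ = α`. -/
theorem lie_curvature_miyaoka_ozawa (θ α : ℝ)
    (hθ0 : 0 < θ) (hθπ : θ < π) (hα0 : 0 < α) (hαπ : α < π) :
    Real.cot (θ / 2) - Real.cot ((α + π) / 2) ≠ 0 ∧
    Real.cot (α / 2) - Real.cot ((θ + π) / 2) ≠ 0 ∧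
    1 + Real.cos (θ - α) ≠ 0 ∧
    ((Real.cot (θ / 2) - Real.cot ((θ + π) / 2)) *
        (Real.cot (α / 2) - Real.cot ((α + π) / 2))) /
      ((Real.cot (θ / 2) - Real.cot ((α + π) / 2)) *
        (Real.cot (α / 2) - Real.cot ((θ + π) / 2))) = 2 / (1 + Real.cos (θ - α)) ∧
    (((Real.cot (θ / 2) - Real.cot ((θ + π) / 2)) *
        (Real.cot (α / 2) - Real.cot ((α + π) / 2))) /
      ((Real.cot (θ / 2) - Real.cot ((α + π) / 2)) *
        (Real.cot (α / 2) - Real.cot ((θ + π) / 2))) = 1 ↔ θ = α) := by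
  have hsθ : 0 < sin (θ / 2) := sin_pos_of_mem_Ioo ⟨by linarith, by linarith⟩
  have hcθ : 0 < cos (θ / 2) := cos_pos_of_mem_Ioo ⟨by linarith, by linarith⟩
  have hsα : 0 < sin (α / 2) := sin_pos_of_mem_Ioo ⟨by linarith, by linarith⟩
  have hcα : 0 < cos (α / 2) := cos_pos_of_mem_Ioo ⟨by linarith, by linarith⟩
  have hcθα : 0 < cos (θ / 2 - α / 2) := cos_pos_of_mem_Ioo ⟨by linarith, by linarith⟩
  have hcos : 1 + cos (θ - α) = 2 * cos (θ / 2 - α / 2) ^ 2 := by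
    rw [← one_add_cos_two_mul]; ring_nf
  have hne : 1 + cos (θ - α) ≠ 0 := by rw [hcos]; positivity
  simp only [add_div _ π, cot_add_pi_div_two, sub_neg_eq_add]
  have hratio : (cot (θ / 2) + tan (θ / 2)) * (cot (α / 2) + tan (α / 2)) /
      ((cot (θ / 2) + tan (α / 2)) * (cot (α / 2) + tan (θ / 2))) = 2 / (1 + cos (θ - α)) := by
    rw [cot_tan_cross_ratio hsθ.ne' hcθ.ne' hsα.ne' hcα.ne' hcθα.ne', hcos]
    field_simp
  refine ⟨?_, ?_, hne, hratio, ?_⟩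
  · rw [cot_add_tan_of_ne_zero hsθ.ne' hcα.ne']; positivity
  · rw [cot_add_tan_of_ne_zero hsα.ne' hcθ.ne', cos_sub_comm]; positivity
  · rw [hratio, div_eq_one_iff_eq hne, eq_comm, ← one_add_one_eq_two, add_right_inj,
      cos_eq_one_iff_of_lt_of_lt (by linarith) (by linarith), sub_eq_zero]
end

section
/- Let θ be a real number with 0 < θ < π/4, and set κ₁ = cot(θ + 3π/4), κ₂ = cot(θ + π/2), κ₃ = cot(θ + π/4), κ₄ = cot θ. Then κ₁ < κ₂ < κ₃ < κ₄, all the differences appearing below are nonzero, and the cross-ratio satisfies ((κ₁ − κ₂)·(κ₄ − κ₃)) / ((κ₁ − κ₃)·(κ₄ − κ₂)) = 1/2. -/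
open Real

/-! The four cotangents are `cot aₖ` for angles `aₖ` in `(0, π)`, where `cot` is strictly
decreasing, which gives the ordering. The identity `cot a - cot b = sin (b - a) / (sin a sin b)`
makes every product of sines `sin aₖ` cancel from the cross-ratio, leaving only the sines of the
angle differences `±π/4, ±π/2`: the cross-ratio is `sin² (π/4) / sin² (π/2) = 1/2`. -/

namespace Real

theorem cot_sub_cot {a b : ℝ} (ha : sin a ≠ 0) (hb : sin b ≠ 0) :
    cot a - cot b = sin (b - a) / (sin a * sin b) := by
  rw [cot_eq_cos_div_sin, cot_eq_cos_div_sin, sin_sub]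
  field_simp

theorem strictAntiOn_cot : StrictAntiOn cot (Set.Ioo 0 π) := by
  rintro a ⟨ha₀, haπ⟩ b ⟨hb₀, hbπ⟩ hab
  have hsa := sin_pos_of_pos_of_lt_pi ha₀ haπ
  have hsb := sin_pos_of_pos_of_lt_pi hb₀ hbπ
  have hsba := sin_pos_of_pos_of_lt_pi (sub_pos.mpr hab) (by linarith)
  rw [← sub_pos, cot_sub_cot hsa.ne' hsb.ne']
  positivity

theorem cot_crossRatio {a b c d : ℝ} (ha : sin a ≠ 0) (hb : sin b ≠ 0) (hc : sin c ≠ 0)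
    (hd : sin d ≠ 0) :
    (cot a - cot b) * (cot d - cot c) / ((cot a - cot c) * (cot d - cot b)) =
      sin (b - a) * sin (c - d) / (sin (c - a) * sin (b - d)) := by
  rw [cot_sub_cot ha hb, cot_sub_cot hd hc, cot_sub_cot ha hc, cot_sub_cot hd hb]
  field_simp

end Real

/-- Let `0 < θ < π/4` and set `κ₁ = cot(θ + 3π/4)`, `κ₂ = cot(θ + π/2)`,
`κ₃ = cot(θ + π/4)`, `κ₄ = cot θ`.  Then `κ₁ < κ₂ < κ₃ < κ₄`, the differences appearing
in the cross-ratio are nonzero, and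
`((κ₁ − κ₂)·(κ₄ − κ₃)) / ((κ₁ − κ₃)·(κ₄ − κ₂)) = 1/2`. -/
theorem lie_curvature_isoparametric_four (θ : ℝ) (h0 : 0 < θ) (h4 : θ < π / 4) :
    Real.cot (θ + 3 * π / 4) < Real.cot (θ + π / 2) ∧
    Real.cot (θ + π / 2) < Real.cot (θ + π / 4) ∧
    Real.cot (θ + π / 4) < Real.cot θ ∧
    Real.cot (θ + 3 * π / 4) - Real.cot (θ + π / 2) ≠ 0 ∧
    Real.cot θ - Real.cot (θ + π / 4) ≠ 0 ∧
    Real.cot (θ + 3 * π / 4) - Real.cot (θ + π / 4) ≠ 0 ∧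
    Real.cot θ - Real.cot (θ + π / 2) ≠ 0 ∧
    ((Real.cot (θ + 3 * π / 4) - Real.cot (θ + π / 2)) *
        (Real.cot θ - Real.cot (θ + π / 4))) /
      ((Real.cot (θ + 3 * π / 4) - Real.cot (θ + π / 4)) *
        (Real.cot θ - Real.cot (θ + π / 2))) = 1 / 2 := by
  have hπ := pi_pos
  have h₁ : θ + 3 * π / 4 ∈ Set.Ioo 0 π := ⟨by linarith, by linarith⟩
  have h₂ : θ + π / 2 ∈ Set.Ioo 0 π := ⟨by linarith, by linarith⟩
  have h₃ : θ + π / 4 ∈ Set.Ioo 0 π := ⟨by linarith, by linarith⟩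
  have h₄ : θ ∈ Set.Ioo 0 π := ⟨h0, by linarith⟩
  have h₁₂ := strictAntiOn_cot h₂ h₁ (by linarith)
  have h₂₃ := strictAntiOn_cot h₃ h₂ (by linarith)
  have h₃₄ := strictAntiOn_cot h₄ h₃ (by linarith)
  refine ⟨h₁₂, h₂₃, h₃₄, sub_ne_zero.mpr h₁₂.ne, sub_ne_zero.mpr h₃₄.ne',
    sub_ne_zero.mpr (h₁₂.trans h₂₃).ne, sub_ne_zero.mpr (h₂₃.trans h₃₄).ne', ?_⟩
  rw [cot_crossRatio (sin_pos_of_mem_Ioo h₁).ne' (sin_pos_of_mem_Ioo h₂).ne'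
      (sin_pos_of_mem_Ioo h₃).ne' (sin_pos_of_mem_Ioo h₄).ne',
    show θ + π / 2 - (θ + 3 * π / 4) = -(π / 4) by ring, show θ + π / 4 - θ = π / 4 by ring,
    show θ + π / 4 - (θ + 3 * π / 4) = -(π / 2) by ring, show θ + π / 2 - θ = π / 2 by ring]
  rw [sin_neg, sin_neg, sin_pi_div_four, sin_pi_div_two, neg_mul, neg_mul, neg_div_neg_eq,
    div_mul_div_comm, mul_self_sqrt zero_le_two]
  norm_num
end
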